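/- Let Φ = (φ, ψ) : 𝔻² → 𝔻² be holomorphic on 𝔻² and extend to a C² map on the closed bidisc, and let ζ = (ζ1, ζ2) ∈ 𝕋² be a point with Φ(ζ) ∈ 𝕋². Then: (i) for each component χ ∈ {φ, ψ} and each j ∈ {1,2}, the number ζj · (∂χ/∂zj)(ζ) / χ(ζ) is real; and (ii) the complex 2×2 Jacobian matrix d_ζΦ = ((∂Φ_ℓ/∂zj)(ζ))_{ℓ,j} is invertible if and only if the two real vectors (ζ1 (∂φ/∂z1)(ζ)/φ(ζ), ζ2 (∂φ/∂z2)(ζ)/φ(ζ)) and (ζ1 (∂ψ/∂z1)(ζ)/ψ(ζ), ζ2 (∂ψ/∂z2)(ζ)/ψ(ζ)) are linearly independent over ℝ. (These vectors are the angular gradients of the local defining functions of the boundary level curves of φ and ψ, so the equivalence says that invertibility of d_ζΦ — the first-order condition — is equivalent to transversal intersection of the boundary level curves at ζ.) -/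

import Mathlib

open MeasureTheory Complex Set

noncomputable section

/-- The open unit bidisc in ℂ². -/
def bidisk : Set (ℂ × ℂ) := {z | ‖z.1‖ < 1 ∧ ‖z.2‖ < 1}

/-- The weight (1-|z₁|²)^β (1-|z₂|²)^β. -/
def wWeight (β : ℝ) (z : ℂ × ℂ) : ℝ :=
  (1 - ‖z.1‖ ^ 2) ^ β * (1 - ‖z.2‖ ^ 2) ^ β

/-- Weighted volume V_β of a set E ⊆ 𝔻². -/
def wVol (β : ℝ) (E : Set (ℂ × ℂ)) : ℝ := ∫ z in E, wWeight β z

/-- Boundedness of the composition operator C_Φ on A²_β(𝔻²). -/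
def CompBounded (β : ℝ) (Φ : ℂ × ℂ → ℂ × ℂ) : Prop :=
  ∃ C : ℝ, 0 < C ∧ ∀ f : ℂ × ℂ → ℂ, DifferentiableOn ℂ f bidisk →
    (∫ z in bidisk, ‖f (Φ z)‖ ^ 2 * wWeight β z) ≤
      C * ∫ z in bidisk, ‖f z‖ ^ 2 * wWeight β z

/-- Evaluation of a two-variable polynomial at a point of ℂ². -/
def pev (P : MvPolynomial (Fin 2) ℂ) (z : ℂ × ℂ) : ℂ := MvPolynomial.eval ![z.1, z.2] P

/-- `Pt` is the reflection p̃(z₁,z₂) = z₁ⁿ z₂ᵐ conj(p(1/z̄₁, 1/z̄₂)) of `P`,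
where (n,m) is the bidegree of `P`. -/
def IsReflection (P Pt : MvPolynomial (Fin 2) ℂ) : Prop :=
  ∀ z : ℂ × ℂ, z.1 ≠ 0 → z.2 ≠ 0 →
    pev Pt z = z.1 ^ (MvPolynomial.degreeOf 0 P) * z.2 ^ (MvPolynomial.degreeOf 1 P) *
      (starRingEnd ℂ) (pev P (1 / (starRingEnd ℂ) z.1, 1 / (starRingEnd ℂ) z.2))

/-- `P` has no zeros in the closed bidisc outside the bitorus 𝕋². -/
def StableOnBidisk (P : MvPolynomial (Fin 2) ℂ) : Prop :=
  ∀ z : ℂ × ℂ, ‖z.1‖ ≤ 1 → ‖z.2‖ ≤ 1 →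
    ¬(‖z.1‖ = 1 ∧ ‖z.2‖ = 1) → pev P z ≠ 0

/-- Wirtinger derivative ∂/∂z₁ within a set (for boundary points, via the C² extension). -/
def wirt1 (f : ℂ × ℂ → ℂ) (s : Set (ℂ × ℂ)) (z : ℂ × ℂ) : ℂ :=
  (fderivWithin ℝ f s z (1, 0) - Complex.I * fderivWithin ℝ f s z (Complex.I, 0)) / 2

/-- Wirtinger derivative ∂/∂z₂ within a set. -/
def wirt2 (f : ℂ × ℂ → ℂ) (s : Set (ℂ × ℂ)) (z : ℂ × ℂ) : ℂ :=
  (fderivWithin ℝ f s z (0, 1) - Complex.I * fderivWithin ℝ f s z (0, Complex.I)) / 2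

/-!
Each component `χ` has a real derivative at `ζ` that is `ℂ`-linear, being a limit of complex
derivatives from inside the bidisc. Since `‖χ‖ ≤ 1` on the closed bidisc with equality at `ζ`,
rotating one coordinate of `ζ` along the torus gives a curve on which `‖χ‖²` is maximal at `ζ`,
so its velocity `i ζⱼ ∂χ/∂zⱼ(ζ)` is orthogonal to `χ(ζ)`: the quotient `ζⱼ ∂χ/∂zⱼ(ζ) / χ(ζ)` is
real. The Jacobian arises from the real matrix of these quotients by scaling its rows by `φ(ζ)`,
`ψ(ζ)` and its columns by `1/ζ₁`, `1/ζ₂`, so both determinants vanish together.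
-/

open Topology Filter ComplexConjugate

lemma bidisk_eq_ball_prod_ball : bidisk = Metric.ball (0 : ℂ) 1 ×ˢ Metric.ball (0 : ℂ) 1 := by
  ext z
  simp [bidisk]

lemma isOpen_bidisk : IsOpen bidisk := by
  rw [bidisk_eq_ball_prod_ball]
  exact Metric.isOpen_ball.prod Metric.isOpen_ball

lemma closure_bidisk :
    closure bidisk = Metric.closedBall (0 : ℂ) 1 ×ˢ Metric.closedBall (0 : ℂ) 1 := by
  rw [bidisk_eq_ball_prod_ball, closure_prod_eq, closure_ball (0 : ℂ) one_ne_zero]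

lemma mem_closure_bidisk {z : ℂ × ℂ} : z ∈ closure bidisk ↔ ‖z.1‖ ≤ 1 ∧ ‖z.2‖ ≤ 1 := by
  simp [closure_bidisk]

lemma uniqueDiffOn_closure_bidisk : UniqueDiffOn ℝ (closure bidisk) := by
  refine uniqueDiffOn_convex ?_ ⟨0, ?_⟩
  · rw [closure_bidisk]
    exact (convex_closedBall 0 1).prod (convex_closedBall 0 1)
  · exact isOpen_bidisk.subset_interior_iff.mpr subset_closure (by simp [bidisk])

theorem fderivWithin_map_smul_of_differentiableOn_complex
    {E F : Type*} [NormedAddCommGroup E] [NormedSpace ℂ E] [NormedAddCommGroup F]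
    [NormedSpace ℂ F] {f : E → F} {U s : Set E} (hU : IsOpen U) (hUs : U ⊆ s)
    (hsU : s ⊆ closure U) (hs : UniqueDiffOn ℝ s) (hf : ContDiffOn ℝ 1 f s)
    (hfU : DifferentiableOn ℂ f U) {z : E} (hz : z ∈ s) (c : ℂ) (v : E) :
    fderivWithin ℝ f s z (c • v) = c • fderivWithin ℝ f s z v := by
  have hcont := hf.continuousOn_fderivWithin hs le_rfl
  refine Set.EqOn.of_subset_closure (f := fun z ↦ fderivWithin ℝ f s z (c • v))
    (g := fun z ↦ c • fderivWithin ℝ f s z v) (fun y hy ↦ ?_) (hcont.clm_apply continuousOn_const)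
    ((hcont.clm_apply continuousOn_const).const_smul c) hUs hsU hz
  have hys : s ∈ 𝓝 y := mem_of_superset (hU.mem_nhds hy) hUs
  simp only [fderivWithin_of_mem_nhds hys,
    (hfU.differentiableAt (hU.mem_nhds hy)).fderiv_restrictScalars ℝ,
    ContinuousLinearMap.coe_restrictScalars', map_smul]

lemma wirt1_eq_fderivWithin {f : ℂ × ℂ → ℂ} {s : Set (ℂ × ℂ)} {z : ℂ × ℂ}
    (h : ∀ (c : ℂ) (v : ℂ × ℂ), fderivWithin ℝ f s z (c • v) = c • fderivWithin ℝ f s z v) :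
    wirt1 f s z = fderivWithin ℝ f s z (1, 0) := by
  have hI : ((I, 0) : ℂ × ℂ) = I • ((1, 0) : ℂ × ℂ) := by simp
  rw [wirt1, hI, h, smul_eq_mul]
  linear_combination (-fderivWithin ℝ f s z (1, 0) / 2) * I_mul_I

lemma wirt2_eq_fderivWithin {f : ℂ × ℂ → ℂ} {s : Set (ℂ × ℂ)} {z : ℂ × ℂ}
    (h : ∀ (c : ℂ) (v : ℂ × ℂ), fderivWithin ℝ f s z (c • v) = c • fderivWithin ℝ f s z v) :
    wirt2 f s z = fderivWithin ℝ f s z (0, 1) := by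
  have hI : ((0, I) : ℂ × ℂ) = I • ((0, 1) : ℂ × ℂ) := by simp
  rw [wirt2, hI, h, smul_eq_mul]
  linear_combination (-fderivWithin ℝ f s z (0, 1) / 2) * I_mul_I

theorem re_fderivWithin_mul_conj_eq_zero_of_isMaxOn {E : Type*} [NormedAddCommGroup E]
    [NormedSpace ℝ E] {χ : E → ℂ} {s : Set E} {z v : E} {γ : ℝ → E}
    (hχ : DifferentiableWithinAt ℝ χ s z) (hmax : IsMaxOn (‖χ ·‖) s z)
    (hγ : HasDerivAt γ v 0) (hγs : ∀ t, γ t ∈ s) (hγ0 : γ 0 = z) :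
    (fderivWithin ℝ χ s z v * conj (χ z)).re = 0 := by
  have hF : HasDerivAt (χ ∘ γ) (fderivWithin ℝ χ s z v) 0 :=
    hasDerivWithinAt_univ.mp <| hχ.hasFDerivWithinAt.comp_hasDerivWithinAt_of_eq 0
      hγ.hasDerivWithinAt (fun t _ ↦ hγs t) hγ0.symm
  have hloc : IsLocalMax (fun t ↦ ‖(χ ∘ γ) t‖ ^ 2) 0 :=
    Filter.Eventually.of_forall fun t ↦ by
      have := isMaxOn_iff.mp hmax _ (hγs t)
      simp only [Function.comp_apply, hγ0] at this ⊢
      gcongr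
  have := hloc.hasDerivAt_eq_zero hF.norm_sq
  rw [Complex.inner] at this
  simpa [hγ0] using this

lemma hasDerivAt_exp_ofReal_mul_I_mul (c : ℂ) :
    HasDerivAt (fun t : ℝ ↦ exp (t * I) * c) (I * c) 0 := by
  have h := (((hasDerivAt_id (0 : ℂ)).mul_const I).cexp.mul_const c).comp_ofReal
  simpa using h

lemma norm_exp_ofReal_mul_I_mul (t : ℝ) (c : ℂ) : ‖exp (t * I) * c‖ = ‖c‖ := by
  simp [norm_exp_ofReal_mul_I]

lemma div_im_eq_neg_re_I_mul_mul_conj {c : ℂ} (hc : ‖c‖ = 1) (w : ℂ) :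
    (w / c).im = -(I * w * conj c).re := by
  have hinv : c⁻¹ = conj c := by
    rw [inv_def, normSq_eq_norm_sq, hc]
    simp
  rw [div_eq_mul_inv, hinv, mul_assoc, I_mul_re]
  ring

lemma ContinuousOn.norm_le_of_mem_closure {X F : Type*} [TopologicalSpace X]
    [SeminormedAddCommGroup F] {f : X → F} {U : Set X} {r : ℝ} (hf : ContinuousOn f (closure U))
    (hb : ∀ z ∈ U, ‖f z‖ ≤ r) {z : X} (hz : z ∈ closure U) : ‖f z‖ ≤ r :=
  ContinuousWithinAt.closure_le hz ((hf z hz).mono subset_closure).norm continuousWithinAt_const hb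

theorem im_mul_wirt_div_eq_zero {χ : ℂ × ℂ → ℂ} (hhol : DifferentiableOn ℂ χ bidisk)
    (hb : ∀ z ∈ bidisk, ‖χ z‖ < 1) (hC1 : ContDiffOn ℝ 1 χ (closure bidisk))
    {ζ : ℂ × ℂ} (hζ1 : ‖ζ.1‖ = 1) (hζ2 : ‖ζ.2‖ = 1) (hχ : ‖χ ζ‖ = 1) :
    (ζ.1 * wirt1 χ (closure bidisk) ζ / χ ζ).im = 0 ∧
      (ζ.2 * wirt2 χ (closure bidisk) ζ / χ ζ).im = 0 := by
  have hζ : ζ ∈ closure bidisk := mem_closure_bidisk.2 ⟨hζ1.le, hζ2.le⟩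
  have hlin := fderivWithin_map_smul_of_differentiableOn_complex isOpen_bidisk subset_closure
    subset_rfl uniqueDiffOn_closure_bidisk hC1 hhol hζ
  have hmax : IsMaxOn (‖χ ·‖) (closure bidisk) ζ := fun z hz ↦ by
    simpa [hχ] using hC1.continuousOn.norm_le_of_mem_closure (fun y hy ↦ (hb y hy).le) hz
  have hχd : DifferentiableWithinAt ℝ χ (closure bidisk) ζ :=
    hC1.differentiableOn one_ne_zero ζ hζ
  have im_div_eq_zero : ∀ (v : ℂ × ℂ) (γ : ℝ → ℂ × ℂ), HasDerivAt γ (I • v) 0 →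
      (∀ t, γ t ∈ closure bidisk) → γ 0 = ζ →
      (fderivWithin ℝ χ (closure bidisk) ζ v / χ ζ).im = 0 := by
    intro v γ hγ hγs hγ0
    have := re_fderivWithin_mul_conj_eq_zero_of_isMaxOn hχd hmax hγ hγs hγ0
    rw [hlin, smul_eq_mul] at this
    rw [div_im_eq_neg_re_I_mul_mul_conj hχ, this, neg_zero]
  constructor
  · rw [wirt1_eq_fderivWithin hlin, ← smul_eq_mul, ← hlin]
    refine im_div_eq_zero _ _ (((hasDerivAt_exp_ofReal_mul_I_mul ζ.1).prodMk
      (hasDerivAt_const (0 : ℝ) ζ.2)).congr_deriv (by simp)) (fun t ↦ ?_) (by simp)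
    exact mem_closure_bidisk.2 ⟨(norm_exp_ofReal_mul_I_mul t ζ.1).trans_le hζ1.le, hζ2.le⟩
  · rw [wirt2_eq_fderivWithin hlin, ← smul_eq_mul, ← hlin]
    refine im_div_eq_zero _ _ (((hasDerivAt_const (0 : ℝ) ζ.1).prodMk
      (hasDerivAt_exp_ofReal_mul_I_mul ζ.2)).congr_deriv (by simp)) (fun t ↦ ?_) (by simp)
    exact mem_closure_bidisk.2 ⟨hζ1.le, (norm_exp_ofReal_mul_I_mul t ζ.2).trans_le hζ2.le⟩

lemma linearIndependent_fin_two_rows_iff {K : Type*} [Field K] (a b c d : K) :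
    LinearIndependent K ![![a, b], ![c, d]] ↔ a * d - b * c ≠ 0 := by
  rw [← Matrix.det_fin_two_of, ← isUnit_iff_ne_zero, ← Matrix.isUnit_iff_isUnit_det,
    ← Matrix.linearIndependent_rows_iff_isUnit]
  rfl

lemma ofReal_re_eq_of_im_eq_zero {x : ℂ} (hx : x.im = 0) : (x.re : ℂ) = x :=
  conj_eq_iff_re.mp (conj_eq_iff_im.mpr hx)

theorem det_ne_zero_iff_linearIndependent_re {a b c d p q z w : ℂ} (hp : p ≠ 0) (hq : q ≠ 0)
    (hz : z ≠ 0) (hw : w ≠ 0) (ha : (z * a / p).im = 0) (hb : (w * b / p).im = 0)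
    (hc : (z * c / q).im = 0) (hd : (w * d / q).im = 0) :
    !![a, b; c, d].det ≠ 0 ↔
      LinearIndependent ℝ
        ![![(z * a / p).re, (w * b / p).re], ![(z * c / q).re, (w * d / q).re]] := by
  have hdet : !![a, b; c, d].det = p * q / (z * w) *
      ((z * a / p).re * (w * d / q).re - (w * b / p).re * (z * c / q).re : ℝ) := by
    push_cast
    rw [ofReal_re_eq_of_im_eq_zero ha, ofReal_re_eq_of_im_eq_zero hb,
      ofReal_re_eq_of_im_eq_zero hc, ofReal_re_eq_of_im_eq_zero hd, Matrix.det_fin_two_of]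
    field_simp
  rw [hdet, linearIndependent_fin_two_rows_iff, mul_ne_zero_iff, ofReal_ne_zero]
  simp [hp, hq, hz, hw]

/-- For a holomorphic self-map Φ = (φ,ψ) of the bidisc which is C² up to the
closed bidisc, at any ζ ∈ 𝕋² with Φ(ζ) ∈ 𝕋²: (i) the angular derivatives
ζⱼ·∂χ/∂zⱼ(ζ)/χ(ζ) are real, and (ii) the Jacobian d_ζΦ is invertible iff the two
angular-gradient vectors are linearly independent over ℝ (transversality). -/
theorem statement0
    (φ ψ : ℂ × ℂ → ℂ)
    (hφhol : DifferentiableOn ℂ φ bidisk)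
    (hψhol : DifferentiableOn ℂ ψ bidisk)
    (hmap : ∀ z ∈ bidisk, (φ z, ψ z) ∈ bidisk)
    (hφC2 : ContDiffOn ℝ 2 φ (closure bidisk))
    (hψC2 : ContDiffOn ℝ 2 ψ (closure bidisk))
    (ζ : ℂ × ℂ) (hζ1 : ‖ζ.1‖ = 1) (hζ2 : ‖ζ.2‖ = 1)
    (hΦζ1 : ‖φ ζ‖ = 1) (hΦζ2 : ‖ψ ζ‖ = 1) :
    ((ζ.1 * wirt1 φ (closure bidisk) ζ / φ ζ).im = 0 ∧
     (ζ.2 * wirt2 φ (closure bidisk) ζ / φ ζ).im = 0 ∧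
     (ζ.1 * wirt1 ψ (closure bidisk) ζ / ψ ζ).im = 0 ∧
     (ζ.2 * wirt2 ψ (closure bidisk) ζ / ψ ζ).im = 0) ∧
    (Matrix.det !![wirt1 φ (closure bidisk) ζ, wirt2 φ (closure bidisk) ζ;
                   wirt1 ψ (closure bidisk) ζ, wirt2 ψ (closure bidisk) ζ] ≠ 0 ↔
      LinearIndependent ℝ
        ![![(ζ.1 * wirt1 φ (closure bidisk) ζ / φ ζ).re,
            (ζ.2 * wirt2 φ (closure bidisk) ζ / φ ζ).re],
          ![(ζ.1 * wirt1 ψ (closure bidisk) ζ / ψ ζ).re,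
            (ζ.2 * wirt2 ψ (closure bidisk) ζ / ψ ζ).re]]) := by
  obtain ⟨hφ1, hφ2⟩ := im_mul_wirt_div_eq_zero hφhol (fun z hz ↦ (hmap z hz).1)
    (hφC2.of_le one_le_two) hζ1 hζ2 hΦζ1
  obtain ⟨hψ1, hψ2⟩ := im_mul_wirt_div_eq_zero hψhol (fun z hz ↦ (hmap z hz).2)
    (hψC2.of_le one_le_two) hζ1 hζ2 hΦζ2
  have ne_zero_of_norm_eq_one {x : ℂ} (hx : ‖x‖ = 1) : x ≠ 0 :=
    norm_ne_zero_iff.mp (hx ▸ one_ne_zero)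
  exact ⟨⟨hφ1, hφ2, hψ1, hψ2⟩, det_ne_zero_iff_linearIndependent_re
    (ne_zero_of_norm_eq_one hΦζ1) (ne_zero_of_norm_eq_one hΦζ2) (ne_zero_of_norm_eq_one hζ1)
    (ne_zero_of_norm_eq_one hζ2) hφ1 hφ2 hψ1 hψ2⟩
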